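/- arXiv:1708.07715 — 3 statements merged into one kernel-verified Lean document; each statement's English description precedes it below -/
import Mathlib

section
/- In the two-week training task graph with present bias b = 1/2 + ε where 0 < ε ≤ 1/54 and reward r = 27: the agent at s prefers to move to v_B; at v_B she prefers the edge to v_{AB} (perceived cost 1 + b·16 = 9 + 16ε) over the edge to v_{BB} (perceived cost 9 + b·1 = 19/2 + ε); but at v_{AB} her perceived cost d_b(v_{AB}) = 16 exceeds her perceived reward b·27 = 27/2 + 27ε, so she quits and the graph is not motivating for b. -/
/-- Kleinberg–Oren task graph: a finite directed graph on `Fin n` with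
non-negative edge costs and terminal nodes `s` and `t`. -/
structure TaskGraph (n : ℕ) where
  E : Finset (Fin n × Fin n)
  c : Fin n × Fin n → ℝ
  c_nonneg : ∀ e, 0 ≤ c e
  s : Fin n
  t : Fin n

namespace TaskGraph

variable {n : ℕ}

/-- `P` is a path in `G` along edges of `G` ending at the target `t`. -/
def IsPath (G : TaskGraph n) : List (Fin n) → Prop
  | [] => False
  | [v] => v = G.t
  | v :: w :: rest => (v, w) ∈ G.E ∧ IsPath G (w :: rest)

/-- Total cost of a path given as a list of nodes. -/
def pathCost (G : TaskGraph n) : List (Fin n) → ℝ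
  | [] => 0
  | [_] => 0
  | v :: w :: rest => G.c (v, w) + pathCost G (w :: rest)

/-- `d(v)`: cost of a cheapest path from `v` to `t`. -/
noncomputable def dist (G : TaskGraph n) (v : Fin n) : ℝ :=
  sInf (G.pathCost '' {P | G.IsPath P ∧ P.head? = some v})

/-- `d_β(v,w) = c(v,w) + β·d(w)`: perceived cost of edge `(v,w)` for present bias `β`. -/
noncomputable def pc (G : TaskGraph n) (β : ℝ) (e : Fin n × Fin n) : ℝ :=
  G.c e + β * G.dist e.2

/-- One step of the agent with present bias `β`: traverse an edge minimizing perceived cost. -/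
def Step (G : TaskGraph n) (β : ℝ) (v w : Fin n) : Prop :=
  (v, w) ∈ G.E ∧ ∀ w', (v, w') ∈ G.E → G.pc β (v, w) ≤ G.pc β (v, w')

/-- Nodes reachable by the agent with present bias `β` starting from `s`. -/
def Reachable (G : TaskGraph n) (β : ℝ) (v : Fin n) : Prop :=
  Relation.ReflTransGen (G.Step β) G.s v

/-- `G` is motivating for present bias `β` and reward `r`: on every greedy walk the agent
never reaches a node `v ≠ t` where the minimum perceived cost exceeds `β·r`. -/
def Motivating (G : TaskGraph n) (β r : ℝ) : Prop :=
  ∀ v, G.Reachable β v → v ≠ G.t → ∃ w, G.Step β v w ∧ G.pc β (v, w) ≤ β * r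

/-- One step of an agent whose present bias varies node by node according to `βc`. -/
def StepV (G : TaskGraph n) (βc : Fin n → ℝ) (v w : Fin n) : Prop :=
  (v, w) ∈ G.E ∧ ∀ w', (v, w') ∈ G.E → G.pc (βc v) (v, w) ≤ G.pc (βc v) (v, w')

def ReachableV (G : TaskGraph n) (βc : Fin n → ℝ) (v : Fin n) : Prop :=
  Relation.ReflTransGen (G.StepV βc) G.s v

/-- `G` is motivating for the present bias configuration `βc` and reward `r`. -/
def MotivatingV (G : TaskGraph n) (βc : Fin n → ℝ) (r : ℝ) : Prop :=
  ∀ v, G.ReachableV βc v → v ≠ G.t → ∃ w, G.StepV βc v w ∧ G.pc (βc v) (v, w) ≤ βc v * r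

/-- The task graph obtained by adding the extra costs of a cost configuration `ct`. -/
def withCost (G : TaskGraph n) (ct : Fin n × Fin n → ℝ) (h : ∀ e, 0 ≤ ct e) : TaskGraph n where
  E := G.E
  c := fun e => G.c e + ct e
  c_nonneg := fun e => add_nonneg (G.c_nonneg e) (h e)
  s := G.s
  t := G.t

/-- `r(G,B)`: infimum over rewards admitting a cost configuration motivating for all `β ∈ B`. -/
noncomputable def rewardInf (G : TaskGraph n) (B : Set ℝ) : ℝ :=
  sInf {r : ℝ | ∃ ct : Fin n × Fin n → ℝ, ∃ h : ∀ e, 0 ≤ ct e,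
    ∀ β ∈ B, (G.withCost ct h).Motivating β r}

/-- `r(G,B^V)`: infimum over rewards admitting a cost configuration motivating for all
present bias configurations with values in `B`. -/
noncomputable def rewardInfV (G : TaskGraph n) (B : Set ℝ) : ℝ :=
  sInf {r : ℝ | ∃ ct : Fin n × Fin n → ℝ, ∃ h : ∀ e, 0 ≤ ct e,
    ∀ βc : Fin n → ℝ, (∀ v, βc v ∈ B) → (G.withCost ct h).MotivatingV βc r}

end TaskGraph

namespace TaskGraph

section Aux
variable {G : TaskGraph 7}
variable (hE : G.E = {(0,1), (0,2), (1,3), (1,4), (2,5), (2,4), (3,6), (4,6), (5,6)})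
variable (ht : G.t = 6)

include hE ht

lemma no_edge6 : ∀ u : Fin 7, ((6 : Fin 7), u) ∉ G.E := by rw [hE]; decide

lemma path6 : ∀ P, G.IsPath P → P.head? = some 6 → P = [6] := by
  intro P hP hh
  cases P with
  | nil => exact absurd hP (by simp [IsPath])
  | cons v rest =>
    simp at hh; subst hh
    cases rest with
    | nil => rfl
    | cons w r => exact absurd hP.1 (no_edge6 hE ht w)

lemma edge5 : ∀ u : Fin 7, ((5 : Fin 7), u) ∈ G.E → u = 6 := by rw [hE]; decide
lemma edge4 : ∀ u : Fin 7, ((4 : Fin 7), u) ∈ G.E → u = 6 := by rw [hE]; decide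
lemma edge3 : ∀ u : Fin 7, ((3 : Fin 7), u) ∈ G.E → u = 6 := by rw [hE]; decide
lemma edge2 : ∀ u : Fin 7, ((2 : Fin 7), u) ∈ G.E → u = 5 ∨ u = 4 := by rw [hE]; decide
lemma edge1 : ∀ u : Fin 7, ((1 : Fin 7), u) ∈ G.E → u = 3 ∨ u = 4 := by rw [hE]; decide

lemma path_pen (v : Fin 7) (hv : v ≠ 6) (hnext : ∀ u : Fin 7, (v, u) ∈ G.E → u = 6) :
    ∀ P, G.IsPath P → P.head? = some v → P = [v, 6] := by
  intro P hP hh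
  cases P with
  | nil => exact absurd hP (by simp [IsPath])
  | cons x rest =>
    simp at hh; subst hh
    cases rest with
    | nil =>
      have : x = (6 : Fin 7) := ht ▸ hP
      exact absurd this hv
    | cons w r =>
      obtain ⟨he, hP'⟩ := hP
      obtain rfl := hnext w he
      obtain rfl : r = [] := by simpa using path6 hE ht (6 :: r) hP' rfl
      rfl

lemma path5 : ∀ P, G.IsPath P → P.head? = some 5 → P = [5, 6] :=
  path_pen hE ht 5 (by decide) (edge5 hE ht)
lemma path4 : ∀ P, G.IsPath P → P.head? = some 4 → P = [4, 6] :=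
  path_pen hE ht 4 (by decide) (edge4 hE ht)
lemma path3 : ∀ P, G.IsPath P → P.head? = some 3 → P = [3, 6] :=
  path_pen hE ht 3 (by decide) (edge3 hE ht)

lemma path2 : ∀ P, G.IsPath P → P.head? = some 2 → P = [2, 5, 6] ∨ P = [2, 4, 6] := by
  intro P hP hh
  cases P with
  | nil => exact absurd hP (by simp [IsPath])
  | cons x rest =>
    simp at hh; subst hh
    cases rest with
    | nil =>
      have : (2 : Fin 7) = (6 : Fin 7) := ht ▸ hP
      exact absurd this (by decide)
    | cons w r =>
      obtain ⟨he, hP'⟩ := hP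
      rcases edge2 hE ht w he with rfl | rfl
      · left; exact congrArg (List.cons 2) (path5 hE ht _ hP' rfl)
      · right; exact congrArg (List.cons 2) (path4 hE ht _ hP' rfl)

lemma path1 : ∀ P, G.IsPath P → P.head? = some 1 → P = [1, 3, 6] ∨ P = [1, 4, 6] := by
  intro P hP hh
  cases P with
  | nil => exact absurd hP (by simp [IsPath])
  | cons x rest =>
    simp at hh; subst hh
    cases rest with
    | nil =>
      have : (1 : Fin 7) = (6 : Fin 7) := ht ▸ hP
      exact absurd this (by decide)
    | cons w r =>
      obtain ⟨he, hP'⟩ := hP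
      rcases edge1 hE ht w he with rfl | rfl
      · left; exact congrArg (List.cons 1) (path3 hE ht _ hP' rfl)
      · right; exact congrArg (List.cons 1) (path4 hE ht _ hP' rfl)

end Aux

section Dist
variable {G : TaskGraph 7}
variable (hE : G.E = {(0,1), (0,2), (1,3), (1,4), (2,5), (2,4), (3,6), (4,6), (5,6)})
variable (hc : G.c = fun e =>
      if e = ((0:Fin 7), (1:Fin 7)) then 1 else if e = (0,2) then 3
      else if e = (1,3) then 1 else if e = (1,4) then 9
      else if e = (2,5) then 9 else if e = (2,4) then 1
      else if e = (3,6) then 13 else if e = (4,6) then 16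
      else if e = (5,6) then 1 else 0)
variable (ht : G.t = 6)

include hE hc ht

lemma dist6 : G.dist 6 = 0 := by
  have hset : {P | G.IsPath P ∧ P.head? = some 6} = {[6]} := by
    ext P
    constructor
    · rintro ⟨h1, h2⟩; exact path6 hE ht P h1 h2
    · rintro rfl; exact ⟨show ((6:Fin 7) = G.t) from ht.symm, rfl⟩
  rw [dist, hset, Set.image_singleton]
  simp [pathCost]

lemma dist5 : G.dist 5 = 1 := by
  have hset : {P | G.IsPath P ∧ P.head? = some 5} = {[5, 6]} := by
    ext P
    constructor
    · rintro ⟨h1, h2⟩; exact path5 hE ht P h1 h2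
    · rintro rfl
      refine ⟨⟨?_, show ((6:Fin 7) = G.t) from ht.symm⟩, rfl⟩
      rw [hE]; decide
  rw [dist, hset, Set.image_singleton]
  simp [pathCost, hc]

lemma dist4 : G.dist 4 = 16 := by
  have hset : {P | G.IsPath P ∧ P.head? = some 4} = {[4, 6]} := by
    ext P
    constructor
    · rintro ⟨h1, h2⟩; exact path4 hE ht P h1 h2
    · rintro rfl
      refine ⟨⟨?_, show ((6:Fin 7) = G.t) from ht.symm⟩, rfl⟩
      rw [hE]; decide
  rw [dist, hset, Set.image_singleton]
  simp [pathCost, hc]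

lemma dist3 : G.dist 3 = 13 := by
  have hset : {P | G.IsPath P ∧ P.head? = some 3} = {[3, 6]} := by
    ext P
    constructor
    · rintro ⟨h1, h2⟩; exact path3 hE ht P h1 h2
    · rintro rfl
      refine ⟨⟨?_, show ((6:Fin 7) = G.t) from ht.symm⟩, rfl⟩
      rw [hE]; decide
  rw [dist, hset, Set.image_singleton]
  simp [pathCost, hc]

lemma dist2 : G.dist 2 = 10 := by
  have hset : {P | G.IsPath P ∧ P.head? = some 2} = {[2, 5, 6], [2, 4, 6]} := by
    ext P
    constructor
    · rintro ⟨h1, h2⟩; exact path2 hE ht P h1 h2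
    · rintro (rfl | rfl)
      · refine ⟨⟨?_, ?_, show ((6:Fin 7) = G.t) from ht.symm⟩, rfl⟩ <;> (rw [hE]; decide)
      · refine ⟨⟨?_, ?_, show ((6:Fin 7) = G.t) from ht.symm⟩, rfl⟩ <;> (rw [hE]; decide)
  rw [dist, hset, Set.image_pair]
  have c1 : G.pathCost [2, 5, 6] = 10 := by simp [pathCost, hc]; norm_num
  have c2 : G.pathCost [2, 4, 6] = 17 := by simp [pathCost, hc]; norm_num
  rw [c1, c2, csInf_pair]
  norm_num

lemma dist1 : G.dist 1 = 14 := by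
  have hset : {P | G.IsPath P ∧ P.head? = some 1} = {[1, 3, 6], [1, 4, 6]} := by
    ext P
    constructor
    · rintro ⟨h1, h2⟩; exact path1 hE ht P h1 h2
    · rintro (rfl | rfl)
      · refine ⟨⟨?_, ?_, show ((6:Fin 7) = G.t) from ht.symm⟩, rfl⟩ <;> (rw [hE]; decide)
      · refine ⟨⟨?_, ?_, show ((6:Fin 7) = G.t) from ht.symm⟩, rfl⟩ <;> (rw [hE]; decide)
  rw [dist, hset, Set.image_pair]
  have c1 : G.pathCost [1, 3, 6] = 14 := by simp [pathCost, hc]; norm_num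
  have c2 : G.pathCost [1, 4, 6] = 25 := by simp [pathCost, hc]; norm_num
  rw [c1, c2, csInf_pair]
  norm_num

end Dist
end TaskGraph

open TaskGraph in
/-- In the two-week training task graph with reward `27` and present bias
`b = 1/2 + ε`, `0 < ε ≤ 1/54` (nodes `0 = s`, `1 = v_A`, `2 = v_B`, `3 = v_AA`,
`4 = v_AB`, `5 = v_BB`, `6 = t`): the agent at `s` prefers to move to `v_B`; at `v_B`
she prefers `(v_B,v_AB)` (perceived cost `1 + b·16 = 9 + 16ε`) over `(v_B,v_BB)`
(perceived cost `9 + b·1 = 19/2 + ε`); but at `v_AB` her perceived cost `16` exceeds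
her perceived reward `b·27 = 27/2 + 27ε`, so she quits and `G` is not motivating. -/
theorem bob_quits (ε b : ℝ) (h0 : 0 < ε) (h1 : ε ≤ 1 / 54) (hb : b = 1 / 2 + ε)
    (G : TaskGraph 7)
    (hE : G.E = {(0,1), (0,2), (1,3), (1,4), (2,5), (2,4), (3,6), (4,6), (5,6)})
    (hc : G.c = fun e =>
      if e = ((0:Fin 7), (1:Fin 7)) then 1 else if e = (0,2) then 3
      else if e = (1,3) then 1 else if e = (1,4) then 9
      else if e = (2,5) then 9 else if e = (2,4) then 1
      else if e = (3,6) then 13 else if e = (4,6) then 16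
      else if e = (5,6) then 1 else 0)
    (hs : G.s = 0) (ht : G.t = 6) :
    G.pc b (0, 2) < G.pc b (0, 1) ∧
    G.pc b (2, 4) = 9 + 16 * ε ∧
    G.pc b (2, 5) = 19 / 2 + ε ∧
    G.pc b (2, 4) < G.pc b (2, 5) ∧
    G.pc b (4, 6) = 16 ∧
    b * 27 < G.pc b (4, 6) ∧
    ¬ G.Motivating b 27 := by
  have d1 := dist1 hE hc ht
  have d2 := dist2 hE hc ht
  have d4 := dist4 hE hc ht
  have d5 := dist5 hE hc ht
  have d6 := dist6 hE hc ht
  have pc01 : G.pc b (0, 1) = 8 + 14 * ε := by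
    simp only [pc, d1, hc]; simp +decide; rw [hb]; ring
  have pc02 : G.pc b (0, 2) = 8 + 10 * ε := by
    simp only [pc, d2, hc]; simp +decide; rw [hb]; ring
  have pc24 : G.pc b (2, 4) = 9 + 16 * ε := by
    simp only [pc, d4, hc]; simp +decide; rw [hb]; ring
  have pc25 : G.pc b (2, 5) = 19 / 2 + ε := by
    simp only [pc, d5, hc]; simp +decide; rw [hb]; ring
  have pc46 : G.pc b (4, 6) = 16 := by
    simp only [pc, d6, hc]; simp +decide
  refine ⟨by rw [pc01, pc02]; linarith, pc24, pc25, by rw [pc24, pc25]; linarith,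
    pc46, by rw [pc46]; linarith [hb], ?_⟩
  intro hM
  have step02 : G.Step b 0 2 := by
    refine ⟨by rw [hE]; decide, fun w' hw' => ?_⟩
    have : w' = 1 ∨ w' = 2 := by revert hw'; rw [hE]; revert w'; decide
    rcases this with rfl | rfl
    · rw [pc01, pc02]; linarith
    · exact le_refl _
  have step24 : G.Step b 2 4 := by
    refine ⟨by rw [hE]; decide, fun w' hw' => ?_⟩
    rcases edge2 hE ht w' hw' with rfl | rfl
    · rw [pc24, pc25]; linarith
    · exact le_refl _
  have reach4 : G.Reachable b 4 := by
    show Relation.ReflTransGen _ G.s 4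
    rw [hs]
    exact Relation.ReflTransGen.head step02 (Relation.ReflTransGen.single step24)
  obtain ⟨w, hw, hle⟩ := hM 4 reach4 (by rw [ht]; decide)
  obtain rfl := edge4 hE ht w hw.1
  rw [pc46] at hle
  linarith
end

section
/- Let P' be a path from w to t whose total original cost is d(w) (a cheapest path), and let c̃ be an extra-cost assignment on the edges of P' such that between any two consecutive intersections of P' with a fixed path P at most one edge carries extra cost, and that extra cost equals the cost of some edge of P' lying between those intersections. Then the total extra cost of P' is at most its total original cost, so for any β ∈ (0,1] and any edge (v,w) with c̃(v,w)=0: c(v,w) + β·(cost of P' with extra costs) ≤ 2·(c(v,w) + β·d(w)). -/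
/-- The doubling lemma: if the edge costs `c₁,…,cₘ ≥ 0` of a cheapest path `P'`
receive extra costs `c̃₁,…,c̃ₘ ≥ 0` such that there is a map, injective on the support
of `c̃`, sending each index with positive extra cost to an index whose original cost
equals that extra cost, then the total extra cost is at most the total original cost;
hence the total modified cost is at most twice the original, and for any `a, β ≥ 0`,
`a + β·Σ(cᵢ + c̃ᵢ) ≤ 2·(a + β·Σcᵢ)`. -/
theorem extra_cost_doubling (m : ℕ) (c ct : Fin m → ℝ)
    (hc : ∀ i, 0 ≤ c i) (hct : ∀ i, 0 ≤ ct i)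
    (f : Fin m → Fin m) (hinj : Set.InjOn f {i | 0 < ct i})
    (hval : ∀ i, 0 < ct i → ct i = c (f i))
    (a β : ℝ) (ha : 0 ≤ a) (hβ : 0 ≤ β) :
    (∑ i, ct i ≤ ∑ i, c i) ∧
    (∑ i, (c i + ct i) ≤ 2 * ∑ i, c i) ∧
    a + β * ∑ i, (c i + ct i) ≤ 2 * (a + β * ∑ i, c i) := by
  have key : ∑ i, ct i ≤ ∑ i, c i := by
    classical
    set S : Finset (Fin m) := Finset.univ.filter (fun i => 0 < ct i) with hS
    have h1 : ∑ i, ct i = ∑ i ∈ S, ct i := by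
      refine (Finset.sum_filter_of_ne ?_).symm
      intro i _ h
      exact lt_of_le_of_ne (hct i) (Ne.symm h)
    have h2 : ∑ i ∈ S, ct i = ∑ i ∈ S, c (f i) := by
      refine Finset.sum_congr rfl ?_
      intro i hi
      exact hval i (Finset.mem_filter.mp hi).2
    have h3 : ∑ i ∈ S, c (f i) = ∑ j ∈ S.image f, c j := by
      refine (Finset.sum_image ?_).symm
      intro x hx y hy hxy
      exact hinj (Finset.mem_filter.mp hx).2 (Finset.mem_filter.mp hy).2 hxy
    have h4 : ∑ j ∈ S.image f, c j ≤ ∑ j, c j :=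
      Finset.sum_le_sum_of_subset_of_nonneg (Finset.subset_univ _)
        (fun j _ _ => hc j)
    linarith
  have h2 : ∑ i, (c i + ct i) ≤ 2 * ∑ i, c i := by
    rw [Finset.sum_add_distrib]; linarith
  refine ⟨key, h2, ?_⟩
  nlinarith [mul_le_mul_of_nonneg_left h2 hβ]
end

section
/- In the task graph of Proposition 7 with 0 < a < 1/2, 1/a integral: by induction on i from 1/a² down to 0, any cost configuration c̃ that prevents an agent (who may be unbiased, β = 1, at any node) from entering node w must assign extra cost greater than 1/a² − i to shortcut i; consequently every s–t path in the modified graph has cost at least 1/a² + 1/a + 2, so no reward r < 1/a² admits a cost configuration motivating for all present bias configurations in {a,1}^V. -/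
namespace TaskGraph

theorem pathCost_nonneg' {n : ℕ} (G : TaskGraph n) : ∀ P, 0 ≤ G.pathCost P
  | [] => le_refl 0
  | [_] => le_refl 0
  | _ :: w :: rest => add_nonneg (G.c_nonneg _) (pathCost_nonneg' G (w :: rest))

theorem isPath_cons' {n : ℕ} (G : TaskGraph n) {v u : Fin n} {P : List (Fin n)}
    (hh : P.head? = some u) (he : (v, u) ∈ G.E) (hP : G.IsPath P) :
    G.IsPath (v :: P) := by
  cases P with
  | nil => simp at hh
  | cons y t =>
    obtain rfl : y = u := by simpa using hh
    exact ⟨he, hP⟩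

theorem potential_lb' {n : ℕ} (G : TaskGraph n) (B : Fin n → ℝ) (hBt : B G.t ≤ 0)
    (hB : ∀ u v : Fin n, (u, v) ∈ G.E → B u ≤ G.c (u, v) + B v) :
    ∀ P, G.IsPath P → ∀ v, P.head? = some v → B v ≤ G.pathCost P := by
  intro P
  induction P with
  | nil => intro h _ _; exact h.elim
  | cons x tail ih =>
    intro hP v hv
    have hxv : x = v := by simpa using hv
    subst hxv
    cases tail with
    | nil =>
      have hvt : x = G.t := hP
      subst hvt
      simpa [pathCost] using hBt
    | cons y rest =>
      obtain ⟨he, hrest⟩ := hP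
      have h2 := ih hrest y rfl
      have h1 := hB x y he
      calc B x ≤ G.c (x, y) + B y := h1
        _ ≤ G.c (x, y) + G.pathCost (y :: rest) := by linarith
        _ = G.pathCost (x :: y :: rest) := rfl

/-- the main path from node `k^2+k+2-m` down to the target node. -/
def mp (k : ℕ) : ℕ → List (Fin (k ^ 2 + k + 4))
  | 0 => [⟨k ^ 2 + k + 2, by omega⟩]
  | m + 1 => ⟨k ^ 2 + k + 2 - (m + 1), by omega⟩ :: mp k m

theorem mp_head (k : ℕ) : ∀ m, ∃ u : Fin (k ^ 2 + k + 4),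
    (mp k m).head? = some u ∧ u.val = k ^ 2 + k + 2 - m
  | 0 => ⟨_, rfl, rfl⟩
  | m + 1 => ⟨_, rfl, rfl⟩

theorem mp_isPath (k : ℕ) (G : TaskGraph (k ^ 2 + k + 4))
    (hE : G.E = Finset.univ.filter
      (fun e : Fin (k ^ 2 + k + 4) × Fin (k ^ 2 + k + 4) =>
        (e.2.val = e.1.val + 1 ∧ e.2.val ≤ k ^ 2 + k + 2) ∨
        (e.1.val ≤ k ^ 2 ∧ e.2.val = k ^ 2 + k + 3) ∨
        (e.1.val = k ^ 2 + k + 3 ∧ e.2.val = k ^ 2 + k + 2)))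
    (ht : G.t.val = k ^ 2 + k + 2) :
    ∀ m, m ≤ k ^ 2 + k + 2 → G.IsPath (mp k m) := by
  intro m
  induction m with
  | zero =>
    intro _
    show (⟨k ^ 2 + k + 2, by omega⟩ : Fin (k ^ 2 + k + 4)) = G.t
    exact Fin.ext (by rw [ht])
  | succ m ih =>
    intro h
    obtain ⟨u, hu1, hu2⟩ := mp_head k m
    show G.IsPath (⟨k ^ 2 + k + 2 - (m + 1), by omega⟩ :: mp k m)
    refine isPath_cons' G hu1 ?_ (ih (by omega))
    rw [hE]
    simp only [Finset.mem_filter, Finset.mem_univ, true_and]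
    left
    refine ⟨?_, by omega⟩
    show u.val = k ^ 2 + k + 2 - (m + 1) + 1
    omega

end TaskGraph


open TaskGraph in
set_option maxHeartbeats 2000000 in
/-- Proposition 7, lower bound (with `a = 1/k`, `k ≥ 3`, so `0 < a < 1/2` and `1/a`
integral): the task graph consists of a main path `v_0 = s, …, v_{k²+k+2} = t` of
unit-cost edges plus shortcuts `(v_i, w)` of cost `2` for `0 ≤ i ≤ k²` and a common
edge `(w, t)` of cost `1/a = k` (node `w` has index `k²+k+3`). Any cost configuration
preventing failure must assign extra cost greater than `1/a² − i` to shortcut `i`, so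
every `s`–`t` path becomes expensive; consequently no reward `r < 1/a² = k²` admits a
cost configuration motivating for all present bias configurations in `{a,1}^V`. -/
theorem no_small_reward_for_variable_bias (k : ℕ) (hk : 3 ≤ k) (a : ℝ)
    (ha : a = 1 / k) (G : TaskGraph (k ^ 2 + k + 4))
    (hE : G.E = Finset.univ.filter
      (fun e : Fin (k ^ 2 + k + 4) × Fin (k ^ 2 + k + 4) =>
        (e.2.val = e.1.val + 1 ∧ e.2.val ≤ k ^ 2 + k + 2) ∨
        (e.1.val ≤ k ^ 2 ∧ e.2.val = k ^ 2 + k + 3) ∨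
        (e.1.val = k ^ 2 + k + 3 ∧ e.2.val = k ^ 2 + k + 2)))
    (hc : G.c = fun e =>
      if e.1.val = k ^ 2 + k + 3 then (k : ℝ)
      else if e.2.val = k ^ 2 + k + 3 then 2
      else 1)
    (hs : G.s.val = 0) (ht : G.t.val = k ^ 2 + k + 2)
    (r : ℝ) (hr : r < (k : ℝ) ^ 2)
    (ct : Fin (k ^ 2 + k + 4) × Fin (k ^ 2 + k + 4) → ℝ) (hct : ∀ e, 0 ≤ ct e) :
    ¬ ∀ βc : Fin (k ^ 2 + k + 4) → ℝ, (∀ v, βc v = a ∨ βc v = 1) →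
        (G.withCost ct hct).MotivatingV βc r := by
  intro H
  have hk3 : (3 : ℝ) ≤ (k : ℝ) := by exact_mod_cast hk
  have hk0 : (0 : ℝ) < (k : ℝ) := by linarith
  set G' := G.withCost ct hct with hG'def
  set wnode : Fin (k ^ 2 + k + 4) := ⟨k ^ 2 + k + 3, by omega⟩ with hwdef
  have hwval : wnode.val = k ^ 2 + k + 3 := by rw [hwdef]
  -- membership characterization
  have hmemE : ∀ u v : Fin (k ^ 2 + k + 4), ((u, v) ∈ G'.E) ↔
      ((v.val = u.val + 1 ∧ v.val ≤ k ^ 2 + k + 2) ∨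
       (u.val ≤ k ^ 2 ∧ v.val = k ^ 2 + k + 3) ∨
       (u.val = k ^ 2 + k + 3 ∧ v.val = k ^ 2 + k + 2)) := by
    intro u v
    show (u, v) ∈ G.E ↔ _
    rw [hE]
    simp only [Finset.mem_filter, Finset.mem_univ, true_and]
  -- cost evaluation
  have hcmain : ∀ u v : Fin (k ^ 2 + k + 4), u.val ≠ k ^ 2 + k + 3 →
      v.val ≠ k ^ 2 + k + 3 → G'.c (u, v) = 1 + ct (u, v) := by
    intro u v h1 h2
    show G.c (u, v) + ct (u, v) = 1 + ct (u, v)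
    simp only [hc]
    rw [if_neg h1, if_neg h2, add_comm]
  have hcshort : ∀ u v : Fin (k ^ 2 + k + 4), u.val ≠ k ^ 2 + k + 3 →
      v.val = k ^ 2 + k + 3 → G'.c (u, v) = 2 + ct (u, v) := by
    intro u v h1 h2
    show G.c (u, v) + ct (u, v) = 2 + ct (u, v)
    simp only [hc]
    rw [if_neg h1, if_pos h2, add_comm]
  have hcw : ∀ u v : Fin (k ^ 2 + k + 4), u.val = k ^ 2 + k + 3 →
      G'.c (u, v) = (k : ℝ) + ct (u, v) := by
    intro u v h1
    show G.c (u, v) + ct (u, v) = (k : ℝ) + ct (u, v)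
    simp only [hc]
    rw [if_pos h1]
  have hpc : ∀ (β : ℝ) (u v : Fin (k ^ 2 + k + 4)),
      G'.pc β (u, v) = G'.c (u, v) + β * G'.dist v := fun _ _ _ => rfl
  -- dist basics
  have hbdd : ∀ v : Fin (k ^ 2 + k + 4),
      BddBelow (G'.pathCost '' {P | G'.IsPath P ∧ P.head? = some v}) := by
    intro v
    refine ⟨0, ?_⟩
    rintro x ⟨P, -, rfl⟩
    exact G'.pathCost_nonneg' P
  have hdt : G'.dist G.t = 0 := by
    have hmem : (0 : ℝ) ∈ G'.pathCost '' {P | G'.IsPath P ∧ P.head? = some G.t} :=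
      ⟨[G.t], ⟨rfl, rfl⟩, rfl⟩
    refine le_antisymm (csInf_le (hbdd _) hmem) (le_csInf ⟨0, hmem⟩ ?_)
    rintro b ⟨P, -, rfl⟩
    exact G'.pathCost_nonneg' P
  have hdw : G'.dist wnode ≤ (k : ℝ) + ct (wnode, G.t) := by
    refine csInf_le (hbdd _) ⟨[wnode, G.t], ⟨⟨?_, rfl⟩, rfl⟩, ?_⟩
    · exact (hmemE wnode G.t).mpr (Or.inr (Or.inr ⟨hwval, ht⟩))
    · show G'.c (wnode, G.t) + G'.pathCost [G.t] = (k : ℝ) + ct (wnode, G.t)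
      rw [hcw _ _ hwval]
      show (k : ℝ) + ct (wnode, G.t) + 0 = _
      ring
  -- entering w with bias a is fatal
  have hwfatal : ∀ βc : Fin (k ^ 2 + k + 4) → ℝ, (∀ v, βc v = a ∨ βc v = 1) →
      βc wnode = a → ¬ G'.ReachableV βc wnode := by
    intro βc hβ hβw hre
    have hwt : wnode ≠ G'.t := by
      intro h
      have h2 : wnode.val = G.t.val := congrArg Fin.val h
      rw [hwval, ht] at h2
      omega
    obtain ⟨u, ⟨hmem, -⟩, hle⟩ := H βc hβ wnode hre hwt
    have hu : u = G.t := by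
      have h3 := (hmemE wnode u).mp hmem
      rw [hwval] at h3
      refine Fin.ext ?_
      rw [ht]
      rcases h3 with ⟨h1, h2⟩ | ⟨h1, -⟩ | ⟨-, h2⟩ <;> omega
    subst hu
    rw [hβw, hpc, hcw _ _ hwval, hdt] at hle
    rw [ha] at hle
    have hct0 := hct (wnode, G.t)
    have e1 : (1 / (k : ℝ)) * r < 1 / (k : ℝ) * (k : ℝ) ^ 2 :=
      mul_lt_mul_of_pos_left hr (by positivity)
    have e2 : (1 / (k : ℝ)) * (k : ℝ) ^ 2 = (k : ℝ) := by
      field_simp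
    nlinarith
  -- outgoing edges from the main line
  have hout : ∀ u v : Fin (k ^ 2 + k + 4), (u, v) ∈ G'.E → (hu : u.val ≤ k ^ 2) →
      v = (⟨u.val + 1, by omega⟩ : Fin (k ^ 2 + k + 4)) ∨ v = wnode := by
    intro u v he hu
    rcases (hmemE u v).mp he with ⟨h1, h2⟩ | ⟨h1, h2⟩ | ⟨h1, h2⟩
    · exact Or.inl (Fin.ext h1)
    · exact Or.inr (Fin.ext (h2.trans hwval.symm))
    · exact absurd h1 (by omega)
  have hmainE : ∀ (i : ℕ) (h1 : i < k ^ 2 + k + 4) (h2 : i + 1 < k ^ 2 + k + 4),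
      i + 1 ≤ k ^ 2 + k + 2 →
      ((⟨i, h1⟩ : Fin (k ^ 2 + k + 4)), (⟨i + 1, h2⟩ : Fin (k ^ 2 + k + 4))) ∈ G'.E := by
    intro i h1 h2 h3
    exact (hmemE _ _).mpr (Or.inl ⟨rfl, h3⟩)
  have hshortE : ∀ u : Fin (k ^ 2 + k + 4), u.val ≤ k ^ 2 → (u, wnode) ∈ G'.E := by
    intro u hu
    exact (hmemE _ _).mpr (Or.inr (Or.inl ⟨hu, hwval⟩))
  -- every main-line node up to k^2 is reachable under every bias configuration
  have hreach : ∀ (i : ℕ), (hi : i ≤ k ^ 2) → ∀ βc : Fin (k ^ 2 + k + 4) → ℝ,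
      (∀ v, βc v = a ∨ βc v = 1) → G'.ReachableV βc ⟨i, by omega⟩ := by
    intro i
    induction i with
    | zero =>
      intro hi βc hβ
      have hs0 : G'.s = (⟨0, by omega⟩ : Fin (k ^ 2 + k + 4)) := Fin.ext hs
      have heq : G'.ReachableV βc G'.s = G'.ReachableV βc ⟨0, by omega⟩ :=
        congrArg _ hs0
      exact Eq.mp heq Relation.ReflTransGen.refl
    | succ i ih =>
      intro hi βc hβ
      have hi' : i ≤ k ^ 2 := by omega
      have hilt : i < k ^ 2 + k + 4 := by omega
      have hi1lt : i + 1 < k ^ 2 + k + 4 := by omega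
      have hvw : (⟨i, hilt⟩ : Fin (k ^ 2 + k + 4)) ≠ wnode := by
        intro h
        have h2 : i = k ^ 2 + k + 3 := (congrArg Fin.val h).trans hwval
        omega
      rcases le_or_gt (G'.pc (βc ⟨i, hilt⟩) (⟨i, hilt⟩, ⟨i + 1, hi1lt⟩))
          (G'.pc (βc ⟨i, hilt⟩) (⟨i, hilt⟩, wnode)) with hle | hlt
      · have hstep : G'.StepV βc ⟨i, hilt⟩ ⟨i + 1, hi1lt⟩ := by
          refine ⟨hmainE i hilt hi1lt (by omega), ?_⟩
          intro w' he'
          rcases hout _ _ he' hi' with rfl | rfl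
          · exact le_refl _
          · exact hle
        exact Relation.ReflTransGen.tail (ih hi' βc hβ) hstep
      · exfalso
        have hβ' : ∀ v, Function.update βc wnode a v = a ∨
            Function.update βc wnode a v = 1 := by
          intro v
          by_cases h : v = wnode
          · subst h; left; rw [Function.update_self]
          · rw [Function.update_of_ne h]; exact hβ v
        have hup : Function.update βc wnode a ⟨i, hilt⟩ = βc ⟨i, hilt⟩ :=
          Function.update_of_ne hvw _ _
        have hstep : G'.StepV (Function.update βc wnode a) ⟨i, hilt⟩ wnode := by
          refine ⟨hshortE _ hi', ?_⟩
          intro w' he'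
          rw [hup]
          rcases hout _ _ he' hi' with rfl | rfl
          · exact le_of_lt hlt
          · exact le_refl _
        refine hwfatal (Function.update βc wnode a) hβ' (Function.update_self _ _ _) ?_
        exact Relation.ReflTransGen.tail (ih hi' (Function.update βc wnode a) hβ') hstep
  have hE' : G'.E = Finset.univ.filter
      (fun e : Fin (k ^ 2 + k + 4) × Fin (k ^ 2 + k + 4) =>
        (e.2.val = e.1.val + 1 ∧ e.2.val ≤ k ^ 2 + k + 2) ∨
        (e.1.val ≤ k ^ 2 ∧ e.2.val = k ^ 2 + k + 3) ∨
        (e.1.val = k ^ 2 + k + 3 ∧ e.2.val = k ^ 2 + k + 2)) := hE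
  have ht' : G'.t.val = k ^ 2 + k + 2 := ht
  -- lower bound on distances on the main line, given shortcut-cost lower bounds
  have distLB : ∀ v : Fin (k ^ 2 + k + 4), v.val ≤ k ^ 2 + k + 2 →
      (∀ u : Fin (k ^ 2 + k + 4), u.val ≤ k ^ 2 → v.val ≤ u.val →
        (k : ℝ) ^ 2 - u.val ≤ ct (u, wnode) + ct (wnode, G.t)) →
      ((k : ℝ) ^ 2 + k + 2 - v.val) ≤ G'.dist v := by
    intro v hv hS
    set B : Fin (k ^ 2 + k + 4) → ℝ := fun u =>
      if u.val = k ^ 2 + k + 3 then (k : ℝ) + ct (wnode, G.t)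
      else if v.val ≤ u.val ∧ u.val ≤ k ^ 2 + k + 2 then ((k : ℝ) ^ 2 + k + 2) - u.val
      else 0 with hBdef
    have hBw : B wnode = (k : ℝ) + ct (wnode, G.t) := by
      simp [hBdef, hwval]
    have hBmid : ∀ u : Fin (k ^ 2 + k + 4), v.val ≤ u.val → u.val ≤ k ^ 2 + k + 2 →
        B u = ((k : ℝ) ^ 2 + k + 2) - u.val := by
      intro u h1 h2
      simp only [hBdef]; rw [if_neg (by omega), if_pos ⟨h1, h2⟩]
    have hBlow : ∀ u : Fin (k ^ 2 + k + 4), u.val < v.val → B u = 0 := by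
      intro u h1
      simp only [hBdef]; rw [if_neg (by omega), if_neg (by omega)]
    have hB0 : ∀ u : Fin (k ^ 2 + k + 4), 0 ≤ B u := by
      intro u
      rcases lt_or_ge u.val v.val with h | h
      · rw [hBlow u h]
      · by_cases h2 : u.val = k ^ 2 + k + 3
        · have h4 : u = wnode := Fin.ext (h2.trans hwval.symm)
          rw [h4, hBw]; linarith [hct (wnode, G.t)]
        · have hu4 := u.isLt
          have h3 : u.val ≤ k ^ 2 + k + 2 := by omega
          rw [hBmid u h h3]
          have hcst : ((u.val : ℕ) : ℝ) ≤ ((k ^ 2 + k + 2 : ℕ) : ℝ) := Nat.cast_le.mpr h3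
          push_cast at hcst
          linarith
    have hBt : B G'.t ≤ 0 := by
      rw [hBmid G'.t (by omega) (by omega), ht']
      push_cast
      linarith
    have hBedge : ∀ u w : Fin (k ^ 2 + k + 4), (u, w) ∈ G'.E →
        B u ≤ G'.c (u, w) + B w := by
      intro u w he
      rcases (hmemE u w).mp he with ⟨h1, h2⟩ | ⟨h1, h2⟩ | ⟨h1, h2⟩
      · rw [hcmain u w (by omega) (by omega)]
        have hctuw := hct (u, w)
        rcases le_or_gt v.val u.val with hg | hg
        · rw [hBmid u hg (by omega), hBmid w (by omega) h2]
          have h1' : ((w.val : ℕ) : ℝ) = ((u.val : ℕ) : ℝ) + 1 := by exact_mod_cast h1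
          linarith
        · rw [hBlow u hg]
          linarith [hB0 w]
      · obtain rfl : w = wnode := Fin.ext (h2.trans hwval.symm)
        rw [hcshort u wnode (by omega) hwval, hBw]
        rcases le_or_gt v.val u.val with hg | hg
        · rw [hBmid u hg (by omega)]
          have hSu := hS u h1 hg
          linarith [hct (u, wnode)]
        · rw [hBlow u hg]
          linarith [hct (u, wnode), hct (wnode, G.t)]
      · obtain rfl : u = wnode := Fin.ext (h1.trans hwval.symm)
        obtain rfl : w = G.t := Fin.ext (h2.trans ht.symm)
        rw [hcw _ _ hwval, hBw, hBmid G.t (by omega) (by omega)]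
        have hcst : ((G.t.val : ℕ) : ℝ) = (k : ℝ) ^ 2 + (k : ℝ) + 2 := by
          rw [ht]; push_cast; ring
        rw [hcst]
        linarith
    obtain ⟨u0, hu1, hu2⟩ := TaskGraph.mp_head k (k ^ 2 + k + 2 - v.val)
    have hueq : u0 = v := Fin.ext (by omega)
    have hPmem : G'.pathCost (TaskGraph.mp k (k ^ 2 + k + 2 - v.val)) ∈
        G'.pathCost '' {P | G'.IsPath P ∧ P.head? = some v} := by
      refine ⟨_, ⟨?_, ?_⟩, rfl⟩
      · exact TaskGraph.mp_isPath k G' hE' ht' _ (by omega)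
      · rw [hu1, hueq]
    refine le_csInf ⟨_, hPmem⟩ ?_
    rintro b ⟨P, ⟨hP, hh⟩, rfl⟩
    have hres := G'.potential_lb' B hBt hBedge P hP v hh
    rwa [hBmid v (le_refl _) hv] at hres
  -- the key downward-induction step
  have key : ∀ u : Fin (k ^ 2 + k + 4), u.val ≤ k ^ 2 →
      (∀ u' : Fin (k ^ 2 + k + 4), u'.val ≤ k ^ 2 → u.val < u'.val →
        (k : ℝ) ^ 2 - u'.val ≤ ct (u', wnode) + ct (wnode, G.t)) →
      (k : ℝ) ^ 2 - u.val ≤ ct (u, wnode) + ct (wnode, G.t) := by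
    intro u hu hIH
    have hlt1 : u.val + 1 < k ^ 2 + k + 4 := by omega
    have huw : u ≠ wnode := by
      intro h
      have h2 : u.val = k ^ 2 + k + 3 := (congrArg Fin.val h).trans hwval
      omega
    have hFs : G'.pc 1 (u, ⟨u.val + 1, hlt1⟩) < G'.pc 1 (u, wnode) := by
      by_contra hcon
      push_neg at hcon
      have hβ : ∀ v : Fin (k ^ 2 + k + 4),
          (if v = wnode then a else 1) = a ∨ (if v = wnode then a else 1) = 1 := by
        intro v; split_ifs; exacts [Or.inl rfl, Or.inr rfl]
      have hstep : G'.StepV (fun v => if v = wnode then a else 1) u wnode := by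
        refine ⟨hshortE u hu, ?_⟩
        intro w' he'
        simp only [if_neg huw]
        rcases hout u w' he' hu with rfl | rfl
        · exact hcon
        · exact le_refl _
      refine hwfatal _ hβ (if_pos rfl) ?_
      exact Relation.ReflTransGen.tail (hreach u.val hu _ hβ) hstep
    have hd1 := distLB ⟨u.val + 1, hlt1⟩ (by show u.val + 1 ≤ k ^ 2 + k + 2; omega)
        (fun u' h1 h2 => hIH u' h1 (by
          have h3 : u.val + 1 ≤ u'.val := h2
          omega))
    have hvv : ((⟨u.val + 1, hlt1⟩ : Fin (k ^ 2 + k + 4)).val : ℝ)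
        = (u.val : ℝ) + 1 := by
      have h5 : (⟨u.val + 1, hlt1⟩ : Fin (k ^ 2 + k + 4)).val = u.val + 1 := rfl
      rw [h5]; push_cast; ring
    rw [hvv] at hd1
    have hpc1 : G'.pc 1 (u, ⟨u.val + 1, hlt1⟩) =
        (1 + ct (u, ⟨u.val + 1, hlt1⟩)) + 1 * G'.dist ⟨u.val + 1, hlt1⟩ := by
      rw [hpc, hcmain u _ (by omega) (by
        intro hx
        have hx2 : u.val + 1 = k ^ 2 + k + 3 := hx
        omega)]
    have hpc2 : G'.pc 1 (u, wnode) = (2 + ct (u, wnode)) + 1 * G'.dist wnode := by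
      rw [hpc, hcshort u wnode (by omega) hwval]
    rw [hpc1, hpc2] at hFs
    linarith [hct (u, ⟨u.val + 1, hlt1⟩), hdw, hd1]
  -- downward induction
  have Sall : ∀ u : Fin (k ^ 2 + k + 4), u.val ≤ k ^ 2 →
      (k : ℝ) ^ 2 - u.val ≤ ct (u, wnode) + ct (wnode, G.t) := by
    have aux : ∀ m : ℕ, ∀ u : Fin (k ^ 2 + k + 4), u.val ≤ k ^ 2 → k ^ 2 ≤ u.val + m →
        (k : ℝ) ^ 2 - u.val ≤ ct (u, wnode) + ct (wnode, G.t) := by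
      intro m
      induction m with
      | zero =>
        intro u h1 h2
        exact key u h1 (fun u' h1' h2' => absurd h1' (by omega))
      | succ m ihm =>
        intro u h1 h2
        exact key u h1 (fun u' h1' h2' => ihm u' h1' (by omega))
    exact fun u h => aux (k ^ 2) u h (by omega)
  -- final contradiction at the source
  have hβf : ∀ v : Fin (k ^ 2 + k + 4),
      (if v = wnode then a else 1) = a ∨ (if v = wnode then a else 1) = 1 := by
    intro v; split_ifs; exacts [Or.inl rfl, Or.inr rfl]
  have hsvalz : G'.s.val = 0 := hs
  have hsne : G'.s ≠ G'.t := by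
    intro h
    have h2 : G'.s.val = G'.t.val := congrArg Fin.val h
    rw [hsvalz, ht'] at h2
    omega
  obtain ⟨u, hstep, hle⟩ := H (fun v => if v = wnode then a else 1) hβf G'.s
      Relation.ReflTransGen.refl hsne
  have hmem := hstep.1
  have hsvle : G'.s.val ≤ k ^ 2 := by omega
  rcases hout G'.s u hmem hsvle with hu | hu
  · have huval : u.val = 1 := by
      rw [hu]
      show G'.s.val + 1 = 1
      omega
    have hsnw : G'.s ≠ wnode := by
      intro h
      have h2 : G'.s.val = k ^ 2 + k + 3 := (congrArg Fin.val h).trans hwval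
      omega
    simp only [if_neg hsnw] at hle
    have hd := distLB u (by omega) (fun u' h1 _ => Sall u' h1)
    have hpcs : G'.pc 1 (G'.s, u) = (1 + ct (G'.s, u)) + 1 * G'.dist u := by
      rw [hpc, hcmain G'.s u (by omega) (by omega)]
    rw [hpcs] at hle
    have h1r : ((u.val : ℕ) : ℝ) = 1 := by rw [huval]; norm_num
    rw [h1r] at hd
    have hctsu := hct (G'.s, u)
    linarith
  · refine hwfatal _ hβf (if_pos rfl) ?_
    exact Relation.ReflTransGen.tail Relation.ReflTransGen.refl (hu ▸ hstep)
end
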